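/- Annulus supersolution computation (Lemma of Section 7): Let d ≥ 2, R > 0, 0 < θ̲ < θ, ρ ∈ (0,1), and ν ∈ (0, θ/θ̲ − 1). Define D : ℝ^d × (0, R²θ̲/(2(d−1))) → ℝ by D(x,t) = √(R² − 2θ̲⁻¹(d−1)t) − ‖x‖, and let A_{ρ,ν} = B(0, (1−ρ)⁻¹R) \ closure(B(0, (1+ν)⁻¹R)). Then for every (x,t) ∈ A_{ρ,ν} × (0, R²θ̲/(2(d−1))), D is smooth near (x,t), its spatial gradient D_xD(x,t) = −x/‖x‖ is a unit vector, and θ ∂_t D(x,t) − tr( (Id − (D_xD ⊗ D_xD)(x,t)) D²_x D(x,t) ) ≤ −R⁻¹ (θ/θ̲ − 1 − ν). -/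

import Mathlib

open Set Filter Topology

noncomputable section

abbrev Euc (d : ℕ) := EuclideanSpace ℝ (Fin d)

noncomputable def clTrace {d : ℕ} (A : Euc d →L[ℝ] Euc d) : ℝ :=
  LinearMap.trace ℝ (Euc d) (A : Euc d →ₗ[ℝ] Euc d)

/-- Id − p ⊗ p as a continuous linear map. -/
noncomputable def projPerp {d : ℕ} (p : Euc d) : Euc d →L[ℝ] Euc d :=
  ContinuousLinearMap.id ℝ (Euc d) - (innerSL ℝ p).smulRight p

noncomputable def spaceGrad {d : ℕ} (φ : Euc d × ℝ → ℝ) (x : Euc d) (t : ℝ) : Euc d :=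
  gradient (fun y => φ (y, t)) x

noncomputable def spaceHess {d : ℕ} (φ : Euc d × ℝ → ℝ) (x : Euc d) (t : ℝ) :
    Euc d →L[ℝ] Euc d :=
  fderiv ℝ (fun y => gradient (fun z => φ (z, t)) y) x

noncomputable def timeDeriv {d : ℕ} (φ : Euc d × ℝ → ℝ) (x : Euc d) (t : ℝ) : ℝ :=
  deriv (fun s => φ (x, s)) t

section helpers
variable {d : ℕ}

lemma hasFDerivAt_norm_euc {x : Euc d} (hx : x ≠ 0) :
    HasFDerivAt (fun y : Euc d => ‖y‖) (‖x‖⁻¹ • innerSL ℝ x) x := by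
  have hnx : ‖x‖ ≠ 0 := norm_ne_zero_iff.2 hx
  have hx2 : (inner ℝ x x : ℝ) ≠ 0 := by
    rw [real_inner_self_eq_norm_sq]; exact pow_ne_zero _ hnx
  have h1 := (hasFDerivAt_id x).inner ℝ (hasFDerivAt_id x)
  have h2 := h1.sqrt hx2
  simp only [id_eq] at h2
  have hfun : (fun y : Euc d => Real.sqrt (inner ℝ y y : ℝ)) = fun y : Euc d => ‖y‖ := by
    funext y
    rw [real_inner_self_eq_norm_mul_norm, Real.sqrt_mul_self (norm_nonneg y)]
  rw [hfun] at h2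
  refine h2.congr_fderiv ?_
  symm
  ext v
  have hs : Real.sqrt (inner ℝ x x : ℝ) = ‖x‖ := by
    rw [real_inner_self_eq_norm_mul_norm, Real.sqrt_mul_self (norm_nonneg x)]
  simp only [ContinuousLinearMap.smul_apply, innerSL_apply_apply, ContinuousLinearMap.coe_comp',
    Function.comp_apply, ContinuousLinearMap.prod_apply, ContinuousLinearMap.coe_id', id_eq,
    fderivInnerCLM_apply, smul_eq_mul, hs]
  rw [real_inner_comm v x]
  field_simp
  ring

lemma clTrace_smulRight (f : Euc d →L[ℝ] ℝ) (q : Euc d) :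
    clTrace (f.smulRight q) = f q := by
  have h : ((f.smulRight q : Euc d →L[ℝ] Euc d) : Euc d →ₗ[ℝ] Euc d)
      = dualTensorHom ℝ (Euc d) (Euc d) ((f : Euc d →ₗ[ℝ] ℝ) ⊗ₜ[ℝ] q) := by
    ext v; simp [dualTensorHom_apply]
  rw [clTrace, h, LinearMap.trace_eq_contract_apply, contractLeft_apply]
  rfl

lemma clTrace_id : clTrace (ContinuousLinearMap.id ℝ (Euc d)) = d := by
  rw [clTrace]
  simp [LinearMap.trace_id]

lemma clTrace_add (A B : Euc d →L[ℝ] Euc d) : clTrace (A + B) = clTrace A + clTrace B := by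
  simp [clTrace]

lemma clTrace_smul (a : ℝ) (A : Euc d →L[ℝ] Euc d) : clTrace (a • A) = a * clTrace A := by
  simp [clTrace]

lemma gradient_const_sub_norm {x : Euc d} (hx : x ≠ 0) (c : ℝ) :
    gradient (fun y : Euc d => c - ‖y‖) x = -(‖x‖⁻¹ • x) := by
  have h : HasFDerivAt (fun y : Euc d => c - ‖y‖) ((0 : Euc d →L[ℝ] ℝ) - ‖x‖⁻¹ • innerSL ℝ x) x :=
    (hasFDerivAt_const c x).sub (hasFDerivAt_norm_euc hx)
  have h2 : HasGradientAt (fun y : Euc d => c - ‖y‖) (-(‖x‖⁻¹ • x)) x := by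
    rw [hasGradientAt_iff_hasFDerivAt]
    have e : InnerProductSpace.toDual ℝ (Euc d) (-(‖x‖⁻¹ • x)) = 0 - ‖x‖⁻¹ • innerSL ℝ x := by
      ext v
      simp [InnerProductSpace.toDual_apply_apply, inner_smul_left, real_inner_comm]
    rw [e]
    exact h
  exact h2.gradient

lemma hasFDerivAt_neg_invnorm_smul {x : Euc d} (hx : x ≠ 0) :
    HasFDerivAt (fun y : Euc d => -(‖y‖⁻¹ • y))
      ((-‖x‖⁻¹) • ContinuousLinearMap.id ℝ (Euc d)
        + (‖x‖ ^ 3)⁻¹ • (innerSL ℝ x).smulRight x) x := by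
  have hnx : ‖x‖ ≠ 0 := norm_ne_zero_iff.2 hx
  have hinv : HasFDerivAt (fun y : Euc d => ‖y‖⁻¹)
      ((-(‖x‖ ^ 2)⁻¹) • (‖x‖⁻¹ • innerSL ℝ x)) x :=
    (hasDerivAt_inv hnx).comp_hasFDerivAt x (hasFDerivAt_norm_euc hx)
  have h := (hinv.smul (hasFDerivAt_id x)).neg
  refine h.congr_fderiv ?_
  symm
  refine ContinuousLinearMap.ext fun v => ?_
  simp only [ContinuousLinearMap.add_apply, ContinuousLinearMap.smul_apply,
    ContinuousLinearMap.coe_id', id_eq, ContinuousLinearMap.smulRight_apply, innerSL_apply_apply,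
    ContinuousLinearMap.neg_apply, smul_eq_mul, neg_smul, smul_smul]
  match_scalars
  · ring
  · field_simp
end helpers

set_option maxHeartbeats 1000000 in
/-- Annulus supersolution computation (Lemma of Section 7). -/
theorem annulus_supersolution (d : ℕ) (hd : 2 ≤ d) (R θ θl ρ ν : ℝ)
    (hR : 0 < R) (hθl : 0 < θl) (hθ : θl < θ)
    (hρ : ρ ∈ Set.Ioo (0:ℝ) 1) (hν : ν ∈ Set.Ioo (0:ℝ) (θ / θl - 1))
    (D : Euc d × ℝ → ℝ)
    (hD : ∀ p : Euc d × ℝ,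
      D p = Real.sqrt (R^2 - 2 * θl⁻¹ * (d - 1) * p.2) - ‖p.1‖)
    (x : Euc d) (t : ℝ)
    (hx : x ∈ Metric.ball (0 : Euc d) ((1 - ρ)⁻¹ * R) \
      closure (Metric.ball (0 : Euc d) ((1 + ν)⁻¹ * R)))
    (ht : t ∈ Set.Ioo (0:ℝ) (R^2 * θl / (2 * (d - 1)))) :
    ContDiffAt ℝ (⊤ : ℕ∞) D (x, t) ∧
    spaceGrad D x t = -(‖x‖⁻¹ • x) ∧ ‖spaceGrad D x t‖ = 1 ∧
    θ * timeDeriv D x t -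
      clTrace ((projPerp (spaceGrad D x t)).comp (spaceHess D x t)) ≤
        -R⁻¹ * (θ / θl - 1 - ν) := by
  have hDf : D = fun p : Euc d × ℝ =>
      Real.sqrt (R^2 - 2 * θl⁻¹ * (d - 1) * p.2) - ‖p.1‖ := funext hD
  subst hDf
  set c : ℝ := 2 * θl⁻¹ * (d - 1) with hc
  -- basic facts
  have hk : (1:ℝ) ≤ (d:ℝ) - 1 := by
    have : (2:ℝ) ≤ (d:ℝ) := by exact_mod_cast hd
    linarith
  have hνpos : 0 < ν := hν.1
  have hrpos : 0 < (1 + ν)⁻¹ * R := by positivity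
  have hxlb : (1 + ν)⁻¹ * R < ‖x‖ := by
    have h2 := hx.2
    rw [closure_ball (0 : Euc d) (ne_of_gt hrpos), Metric.mem_closedBall, dist_zero_right] at h2
    exact lt_of_not_ge h2
  have hx0 : x ≠ 0 := by
    intro h
    rw [h, norm_zero] at hxlb
    exact absurd hxlb (not_lt.2 hrpos.le)
  have hnx : (0:ℝ) < ‖x‖ := lt_trans hrpos hxlb
  have hcpos : 0 < c := by
    have : 0 < θl⁻¹ := inv_pos.2 hθl
    positivity
  have harg : 0 < R^2 - c * t := by
    have h1 : t * (2 * ((d:ℝ) - 1)) < R^2 * θl := by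
      have := ht.2
      rw [lt_div_iff₀ (by linarith : (0:ℝ) < 2 * ((d:ℝ) - 1))] at this
      exact this
    have h2 : 0 < θl⁻¹ := inv_pos.2 hθl
    have h3 : θl * θl⁻¹ = 1 := mul_inv_cancel₀ (ne_of_gt hθl)
    have h4 : R^2 * θl * θl⁻¹ = R^2 := by field_simp
    nlinarith [mul_lt_mul_of_pos_right h1 h2, h4]
  set s : ℝ := Real.sqrt (R^2 - c * t) with hs
  have hspos : 0 < s := Real.sqrt_pos.2 harg
  have hsR : s ≤ R := by
    rw [hs]
    calc Real.sqrt (R^2 - c * t) ≤ Real.sqrt (R^2) :=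
          Real.sqrt_le_sqrt (by nlinarith [mul_pos hcpos ht.1])
      _ = R := Real.sqrt_sq hR.le
  -- gradient
  have hgrad : spaceGrad (fun p : Euc d × ℝ =>
      Real.sqrt (R^2 - c * p.2) - ‖p.1‖) x t = -(‖x‖⁻¹ • x) :=
    gradient_const_sub_norm hx0 (Real.sqrt (R^2 - c * t))
  -- time derivative
  have htime : timeDeriv (fun p : Euc d × ℝ =>
      Real.sqrt (R^2 - c * p.2) - ‖p.1‖) x t = -c / (2 * s) := by
    have hf : HasDerivAt (fun τ : ℝ => R^2 - c * τ) (-c) t := by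
      simpa using ((hasDerivAt_id t).const_mul c).const_sub (R^2)
    have h2 := (hf.sqrt harg.ne').sub_const ‖x‖
    exact h2.deriv
  -- Hessian
  set H : Euc d →L[ℝ] Euc d := (-‖x‖⁻¹) • ContinuousLinearMap.id ℝ (Euc d)
      + (‖x‖ ^ 3)⁻¹ • (innerSL ℝ x).smulRight x with hH
  have hhess : spaceHess (fun p : Euc d × ℝ =>
      Real.sqrt (R^2 - c * p.2) - ‖p.1‖) x t = H := by
    have hev : (fun y : Euc d => gradient (fun z : Euc d => Real.sqrt (R^2 - c * t) - ‖z‖) y)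
        =ᶠ[𝓝 x] (fun y : Euc d => -(‖y‖⁻¹ • y)) := by
      filter_upwards [IsOpen.mem_nhds isOpen_compl_singleton hx0] with y hy
      exact gradient_const_sub_norm hy _
    show fderiv ℝ (fun y : Euc d =>
        gradient (fun z : Euc d => Real.sqrt (R^2 - c * t) - ‖z‖) y) x = H
    rw [Filter.EventuallyEq.fderiv_eq hev]
    exact (hasFDerivAt_neg_invnorm_smul hx0).fderiv
  -- projection absorbs the Hessian
  have hinner0 : ∀ v : Euc d, (inner ℝ (-(‖x‖⁻¹ • x)) (H v) : ℝ) = 0 := by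
    intro v
    simp only [hH, ContinuousLinearMap.add_apply, ContinuousLinearMap.smul_apply,
      ContinuousLinearMap.coe_id', id_eq, ContinuousLinearMap.smulRight_apply, innerSL_apply_apply,
      inner_neg_left, inner_smul_left, inner_add_right, inner_smul_right, smul_eq_mul,
      RCLike.star_def, conj_trivial, real_inner_smul_right]
    rw [real_inner_self_eq_norm_sq]
    field_simp
    ring
  have hcomp : (projPerp (-(‖x‖⁻¹ • x))).comp H = H := by
    refine ContinuousLinearMap.ext fun v => ?_
    simp only [ContinuousLinearMap.comp_apply, projPerp, ContinuousLinearMap.sub_apply,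
      ContinuousLinearMap.coe_id', id_eq, ContinuousLinearMap.smulRight_apply, innerSL_apply_apply,
      hinner0 v, zero_smul, sub_zero]
  -- trace of H
  have htr : clTrace H = -((d:ℝ) - 1) * ‖x‖⁻¹ := by
    rw [hH, clTrace_add, clTrace_smul, clTrace_smul, clTrace_id, clTrace_smulRight,
      innerSL_apply_apply, real_inner_self_eq_norm_sq]
    field_simp
    ring
  -- smoothness
  have hsmooth : ContDiffAt ℝ (⊤ : ℕ∞) (fun p : Euc d × ℝ =>
      Real.sqrt (R^2 - c * p.2) - ‖p.1‖) (x, t) := by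
    have h1 : ContDiffAt ℝ (⊤ : ℕ∞) (fun p : Euc d × ℝ => R^2 - c * p.2) (x, t) :=
      contDiffAt_const.sub (contDiffAt_const.mul contDiffAt_snd)
    have h2 := h1.sqrt harg.ne'
    have h3 : ContDiffAt ℝ (⊤ : ℕ∞) (fun p : Euc d × ℝ => ‖p.1‖) (x, t) :=
      (contDiffAt_norm ℝ hx0).comp (x, t) contDiffAt_fst
    exact h2.sub h3
  refine ⟨hsmooth, hgrad, ?_, ?_⟩
  · rw [hgrad]
    simp [norm_smul, abs_of_nonneg (inv_nonneg.2 hnx.le), inv_mul_cancel₀ (ne_of_gt hnx)]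
  · rw [hgrad, htime, hhess, hcomp, htr]
    -- final arithmetic
    have hxinv : ‖x‖⁻¹ < (1 + ν) * R⁻¹ := by
      have := inv_strictAnti₀ hrpos hxlb
      rwa [mul_inv, inv_inv] at this
    have hsinv : R⁻¹ ≤ s⁻¹ := inv_anti₀ hspos hsR
    have hθ0 : 0 < θ := lt_trans hθl hθ
    have hθk : 0 < θ * θl⁻¹ * ((d:ℝ) - 1) := by
      have h2 : 0 < θl⁻¹ := inv_pos.2 hθl
      nlinarith
    have e1 : θ * (-c / (2 * s)) = -(θ * θl⁻¹ * ((d:ℝ) - 1)) * s⁻¹ := by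
      rw [hc]
      field_simp
    rw [e1]
    have hν2 : ν < θ * θl⁻¹ - 1 := by
      have := hν.2
      rwa [div_eq_mul_inv] at this
    rw [div_eq_mul_inv]
    have h1 : θ * θl⁻¹ * ((d:ℝ) - 1) * R⁻¹ ≤ θ * θl⁻¹ * ((d:ℝ) - 1) * s⁻¹ :=
      mul_le_mul_of_nonneg_left hsinv hθk.le
    have h2 : ((d:ℝ) - 1) * ‖x‖⁻¹ ≤ ((d:ℝ) - 1) * ((1 + ν) * R⁻¹) :=
      mul_le_mul_of_nonneg_left hxinv.le (by linarith)
    have hRinv : 0 < R⁻¹ := inv_pos.2 hR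
    have h3 : 0 ≤ ((d:ℝ) - 1 - 1) * ((θ * θl⁻¹ - 1 - ν) * R⁻¹) :=
      mul_nonneg (by linarith) (mul_nonneg (by linarith) hRinv.le)
    linarith [h1, h2, h3]

end
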